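/- Fix an integer d ≥ 3, a bounded domain D ⊂ ℝ^d, ε ∈ (0,1), δ ∈ (0, 2/(d−2)], a locally finite set P ⊂ ℝ^d with at least two elements, and nonnegative reals (ρ_z)_{z∈P}. The point-process hole-partition construction satisfies: (i) every z ∈ n^ε(D) has ε^{d/(d−2)} ρ_z < ε^{1+δ}, R_{ε,z} > ε², and 2√d ε^{d/(d−2)} ρ_z < R_{ε,z}; (ii) D^ε_b ⊆ {x ∈ ℝ^d : dist(x, D) ≤ 2}; (iii) for every z ∈ n^ε(D), the ball B(εz, R_{ε,z}) is disjoint from D^ε_b. -/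

import Mathlib

/-!
Points of `n^ε(D)` lie outside `J`, `K` and `C`, which is (i); (ii) holds because every hole has
radius at most `2` and is centred at a point of `D`. For (iii), a hole centred at `w ∈ J ∪ K ∪ C`
lies in `H̃_b`, which misses `B(εz, R_{ε,z})` since `z ∉ Ĩ`. A hole centred at `w ∈ Ĩ` is contained in
`B(εw, R_{ε,w})` because `w ∉ C` and `√d ≥ 1`, and the balls `B(εz, R_{ε,z})`, `B(εw, R_{ε,w})` are
disjoint since both radii are at most `ε |z - w| / 4`.
-/

open Metric Set Bornology

noncomputable section

variable (d : ℕ)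

/-- `R_{ε,z} := (ε/4) min( inf_{w∈P, w≠z} |w − z| , 1 )`. -/
def Rmin (ε : ℝ) (Pts : Set (EuclideanSpace ℝ (Fin d))) (z : EuclideanSpace ℝ (Fin d)) : ℝ :=
  ε / 4 * min (infDist z (Pts \ {z})) 1

/-- `Φ^ε(D) := {z ∈ P : εz ∈ D}`. -/
def PhiEpsP (Pts D : Set (EuclideanSpace ℝ (Fin d))) (ε : ℝ) :
    Set (EuclideanSpace ℝ (Fin d)) :=
  {z ∈ Pts | ε • z ∈ D}

/-- `J := {z ∈ Φ^ε(D) : ε^{d/(d−2)} ρ_z ≥ ε^{1+δ}}`. -/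
def JbP (Pts D : Set (EuclideanSpace ℝ (Fin d))) (ε δ : ℝ)
    (ρ : EuclideanSpace ℝ (Fin d) → ℝ) : Set (EuclideanSpace ℝ (Fin d)) :=
  {z ∈ PhiEpsP d Pts D ε | ε ^ (1 + δ) ≤ ε ^ ((d : ℝ) / ((d : ℝ) - 2)) * ρ z}

/-- `K := {z ∈ Φ^ε(D) \ J : R_{ε,z} ≤ ε²}`. -/
def KbP (Pts D : Set (EuclideanSpace ℝ (Fin d))) (ε δ : ℝ)
    (ρ : EuclideanSpace ℝ (Fin d) → ℝ) : Set (EuclideanSpace ℝ (Fin d)) :=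
  {z ∈ PhiEpsP d Pts D ε \ JbP d Pts D ε δ ρ | Rmin d ε Pts z ≤ ε ^ 2}

/-- `C := {z ∈ Φ^ε(D) \ (J∪K) : 2√d ε^{d/(d−2)} ρ_z ≥ R_{ε,z}}`. -/
def CbP (Pts D : Set (EuclideanSpace ℝ (Fin d))) (ε δ : ℝ)
    (ρ : EuclideanSpace ℝ (Fin d) → ℝ) : Set (EuclideanSpace ℝ (Fin d)) :=
  {z ∈ PhiEpsP d Pts D ε \ (JbP d Pts D ε δ ρ ∪ KbP d Pts D ε δ ρ) |
    Rmin d ε Pts z ≤ 2 * Real.sqrt d * (ε ^ ((d : ℝ) / ((d : ℝ) - 2)) * ρ z)}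

/-- `H̃_b := ∪_{z ∈ J∪K∪C} B(εz, 2 min(ε^{d/(d−2)} ρ_z, 1))`. -/
def HtildeP (Pts D : Set (EuclideanSpace ℝ (Fin d))) (ε δ : ℝ)
    (ρ : EuclideanSpace ℝ (Fin d) → ℝ) : Set (EuclideanSpace ℝ (Fin d)) :=
  ⋃ z ∈ JbP d Pts D ε δ ρ ∪ KbP d Pts D ε δ ρ ∪ CbP d Pts D ε δ ρ,
    ball (ε • z) (2 * min (ε ^ ((d : ℝ) / ((d : ℝ) - 2)) * ρ z) 1)

/-- `Ĩ := {z ∈ Φ^ε(D) \ (J∪K∪C) : H̃_b ∩ B(εz, R_{ε,z}) ≠ ∅}`. -/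
def ItildeP (Pts D : Set (EuclideanSpace ℝ (Fin d))) (ε δ : ℝ)
    (ρ : EuclideanSpace ℝ (Fin d) → ℝ) : Set (EuclideanSpace ℝ (Fin d)) :=
  {z ∈ PhiEpsP d Pts D ε \ (JbP d Pts D ε δ ρ ∪ KbP d Pts D ε δ ρ ∪ CbP d Pts D ε δ ρ) |
    (HtildeP d Pts D ε δ ρ ∩ ball (ε • z) (Rmin d ε Pts z)).Nonempty}

/-- `I_b := J∪K∪C∪Ĩ`. -/
def IbP (Pts D : Set (EuclideanSpace ℝ (Fin d))) (ε δ : ℝ)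
    (ρ : EuclideanSpace ℝ (Fin d) → ℝ) : Set (EuclideanSpace ℝ (Fin d)) :=
  JbP d Pts D ε δ ρ ∪ KbP d Pts D ε δ ρ ∪ CbP d Pts D ε δ ρ ∪ ItildeP d Pts D ε δ ρ

/-- `n^ε(D) := Φ^ε(D) \ I_b`. -/
def nEpsP (Pts D : Set (EuclideanSpace ℝ (Fin d))) (ε δ : ℝ)
    (ρ : EuclideanSpace ℝ (Fin d) → ℝ) : Set (EuclideanSpace ℝ (Fin d)) :=
  PhiEpsP d Pts D ε \ IbP d Pts D ε δ ρ

/-- `D^ε_b := ∪_{z∈I_b} B(εz, 2 min(ε^{d/(d−2)} ρ_z, 1))`. -/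
def DbP (Pts D : Set (EuclideanSpace ℝ (Fin d))) (ε δ : ℝ)
    (ρ : EuclideanSpace ℝ (Fin d) → ℝ) : Set (EuclideanSpace ℝ (Fin d)) :=
  ⋃ z ∈ IbP d Pts D ε δ ρ,
    ball (ε • z) (2 * min (ε ^ ((d : ℝ) / ((d : ℝ) - 2)) * ρ z) 1)

theorem four_mul_Rmin_le_mul_dist {ε : ℝ} (hε : 0 ≤ ε) {Pts : Set (EuclideanSpace ℝ (Fin d))}
    {z w : EuclideanSpace ℝ (Fin d)} (hw : w ∈ Pts) (hne : w ≠ z) :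
    4 * Rmin d ε Pts z ≤ ε * dist z w := by
  have hmin : min (infDist z (Pts \ {z})) 1 ≤ dist z w :=
    (min_le_left _ _).trans (infDist_le_dist_of_mem ⟨hw, hne⟩)
  calc 4 * Rmin d ε Pts z = ε * min (infDist z (Pts \ {z})) 1 := by unfold Rmin; ring
    _ ≤ ε * dist z w := mul_le_mul_of_nonneg_left hmin hε

theorem disjoint_ball_Rmin {ε : ℝ} (hε : 0 ≤ ε) {Pts : Set (EuclideanSpace ℝ (Fin d))}
    {z w : EuclideanSpace ℝ (Fin d)} (hz : z ∈ Pts) (hw : w ∈ Pts) (hne : z ≠ w) :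
    Disjoint (ball (ε • z) (Rmin d ε Pts z)) (ball (ε • w) (Rmin d ε Pts w)) := by
  apply ball_disjoint_ball
  rw [dist_smul₀, Real.norm_of_nonneg hε]
  have hz' := four_mul_Rmin_le_mul_dist d hε hw hne.symm
  have hw' := four_mul_Rmin_le_mul_dist d hε hz hne
  rw [dist_comm] at hw'
  nlinarith [dist_nonneg (x := z) (y := w)]

theorem ball_two_mul_min_subset {X : Type*} [PseudoMetricSpace X] (c : X) {s a : ℝ}
    (hs : 1 ≤ s) : ball c (2 * min a 1) ⊆ ball c (2 * s * a) := by
  intro x hx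
  have ha : 0 < a := by
    by_contra! ha
    have := dist_nonneg.trans_lt hx
    linarith [min_le_left a 1]
  exact ball_subset_ball (by nlinarith [min_le_left a 1]) hx

theorem IbP_subset_PhiEpsP {Pts D : Set (EuclideanSpace ℝ (Fin d))} {ε δ : ℝ}
    {ρ : EuclideanSpace ℝ (Fin d) → ℝ} : IbP d Pts D ε δ ρ ⊆ PhiEpsP d Pts D ε := by
  rintro w (((hw | hw) | hw) | hw)
  exacts [hw.1, hw.1.1, hw.1.1, hw.1.1]

theorem bounds_of_notMem_JbP_KbP_CbP {Pts D : Set (EuclideanSpace ℝ (Fin d))} {ε δ : ℝ}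
    {ρ : EuclideanSpace ℝ (Fin d) → ℝ} {z : EuclideanSpace ℝ (Fin d)}
    (hz : z ∈ PhiEpsP d Pts D ε)
    (hJKC : z ∉ JbP d Pts D ε δ ρ ∪ KbP d Pts D ε δ ρ ∪ CbP d Pts D ε δ ρ) :
    ε ^ ((d : ℝ) / ((d : ℝ) - 2)) * ρ z < ε ^ (1 + δ) ∧
      ε ^ 2 < Rmin d ε Pts z ∧
      2 * Real.sqrt d * (ε ^ ((d : ℝ) / ((d : ℝ) - 2)) * ρ z) < Rmin d ε Pts z := by
  simp only [mem_union, not_or] at hJKC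
  obtain ⟨⟨hJ, hK⟩, hC⟩ := hJKC
  refine ⟨?_, ?_, ?_⟩
  · by_contra! h; exact hJ ⟨hz, h⟩
  · by_contra! h; exact hK ⟨⟨hz, hJ⟩, h⟩
  · by_contra! h; exact hC ⟨⟨hz, fun h' => h'.elim hJ hK⟩, h⟩

theorem DbP_subset_infDist_le_two {Pts D : Set (EuclideanSpace ℝ (Fin d))} {ε δ : ℝ}
    {ρ : EuclideanSpace ℝ (Fin d) → ℝ} : DbP d Pts D ε δ ρ ⊆ {x | infDist x D ≤ 2} := by
  simp only [DbP, iUnion₂_subset_iff]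
  intro w hw x hx
  calc infDist x D ≤ dist x (ε • w) := infDist_le_dist_of_mem (IbP_subset_PhiEpsP d hw).2
    _ ≤ 2 * min (ε ^ ((d : ℝ) / ((d : ℝ) - 2)) * ρ w) 1 := (mem_ball.mp hx).le
    _ ≤ 2 := by linarith [min_le_right (ε ^ ((d : ℝ) / ((d : ℝ) - 2)) * ρ w) 1]

theorem disjoint_ball_Rmin_DbP (hd : 1 ≤ d) {Pts D : Set (EuclideanSpace ℝ (Fin d))} {ε δ : ℝ}
    (hε : 0 ≤ ε) {ρ : EuclideanSpace ℝ (Fin d) → ℝ} {z : EuclideanSpace ℝ (Fin d)}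
    (hz : z ∈ nEpsP d Pts D ε δ ρ) :
    Disjoint (ball (ε • z) (Rmin d ε Pts z)) (DbP d Pts D ε δ ρ) := by
  obtain ⟨hzΦ, hzI⟩ := hz
  have hzJKC : z ∉ JbP d Pts D ε δ ρ ∪ KbP d Pts D ε δ ρ ∪ CbP d Pts D ε δ ρ :=
    fun h => hzI (Or.inl h)
  simp only [DbP, disjoint_iUnion₂_right]
  rintro w (hw | hw)
  · have hzH : Disjoint (ball (ε • z) (Rmin d ε Pts z)) (HtildeP d Pts D ε δ ρ) := by
      rw [disjoint_iff_inter_eq_empty, inter_comm, ← not_nonempty_iff_eq_empty]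
      exact fun hne => hzI (Or.inr ⟨⟨hzΦ, hzJKC⟩, hne⟩)
    exact hzH.mono_right (subset_biUnion_of_mem (u := fun w =>
      ball (ε • w) (2 * min (ε ^ ((d : ℝ) / ((d : ℝ) - 2)) * ρ w) 1)) hw)
  · have hne : z ≠ w := by rintro rfl; exact hzI (Or.inr hw)
    have hsqrt : 1 ≤ Real.sqrt d := Real.one_le_sqrt.mpr (by exact_mod_cast hd)
    have hwR := (bounds_of_notMem_JbP_KbP_CbP d hw.1.1 hw.1.2).2.2
    refine (disjoint_ball_Rmin d hε hzΦ.1 hw.1.1.1 hne).mono_right ?_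
    exact (ball_two_mul_min_subset _ hsqrt).trans (ball_subset_ball (by linarith))

theorem hole_partition_point_process
    (hd : 3 ≤ d)
    (D : Set (EuclideanSpace ℝ (Fin d)))
    (ε : ℝ) (hε : ε ∈ Set.Ioo (0 : ℝ) 1)
    (δ : ℝ)
    (Pts : Set (EuclideanSpace ℝ (Fin d)))
    (ρ : EuclideanSpace ℝ (Fin d) → ℝ) :
    (∀ z ∈ nEpsP d Pts D ε δ ρ,
        ε ^ ((d : ℝ) / ((d : ℝ) - 2)) * ρ z < ε ^ (1 + δ) ∧
        ε ^ 2 < Rmin d ε Pts z ∧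
        2 * Real.sqrt d * (ε ^ ((d : ℝ) / ((d : ℝ) - 2)) * ρ z) < Rmin d ε Pts z) ∧
    DbP d Pts D ε δ ρ ⊆ {x | infDist x D ≤ 2} ∧
    (∀ z ∈ nEpsP d Pts D ε δ ρ,
        ball (ε • z) (Rmin d ε Pts z) ∩ DbP d Pts D ε δ ρ = ∅) :=
  ⟨fun _ hz => bounds_of_notMem_JbP_KbP_CbP d hz.1 fun h => hz.2 (Or.inl h),
    DbP_subset_infDist_le_two d,
    fun _ hz => (disjoint_ball_Rmin_DbP d (by omega) hε.1.le hz).inter_eq⟩
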